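/- For any integral non-degenerate variety X ⊂ P^r and any q ∈ P^r, every subset S ⊂ X irredundantly spanning q has cardinality at most r + 1; i.e., S(X,q,t) = ∅ for all t ≥ r + 2. Moreover S(X,q,r+1) ≠ ∅, and it contains a general subset of X of cardinality r + 1. -/

import Mathlib

open scoped LinearAlgebra.Projectivization
open Projectivization

noncomputable section

variable {k : Type} [Field k]

/-- Projective space of the vector space of functions `ι → k`. -/
abbrev PJ (k : Type) [Field k] (ι : Type) := ℙ k (ι → k)

/-- Projective `r`-space `ℙ^r` over `k`. -/
abbrev PP (k : Type) [Field k] (r : ℕ) := PJ k (Fin (r + 1))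

/-- The (projective) linear span of a set of points of projective space. -/
def pspan {ι : Type} (S : Set (PJ k ι)) : Set (PJ k ι) :=
  {p | p.rep ∈ Submodule.span k (Projectivization.rep '' S)}

/-- The `X`-rank of a point `q`: minimal cardinality of a finite subset of `X`
whose linear span contains `q`. -/
def xrank {ι : Type} (X : Set (PJ k ι)) (q : PJ k ι) : ℕ :=
  sInf {n | ∃ S : Finset (PJ k ι), ↑S ⊆ X ∧ S.card = n ∧ q ∈ pspan (↑S : Set (PJ k ι))}

/-- `𝒮(X,q)`: the set of rank-evincing subsets of `X` for `q`. -/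
def rankSets {ι : Type} (X : Set (PJ k ι)) (q : PJ k ι) : Set (Finset (PJ k ι)) :=
  {S | ↑S ⊆ X ∧ S.card = xrank X q ∧ q ∈ pspan (↑S : Set (PJ k ι))}

/-- `W_q := ⋂_{S ∈ 𝒮(X,q)} ⟨S⟩`, the non-uniqueness set of `q`. -/
def Wset {ι : Type} (X : Set (PJ k ι)) (q : PJ k ι) : Set (PJ k ι) :=
  ⋂ S ∈ rankSets X q, pspan (↑S : Set (PJ k ι))

/-- `S` irredundantly spans `q`. -/
def IrrSpans {ι : Type} (q : PJ k ι) (S : Finset (PJ k ι)) : Prop :=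
  q ∈ pspan (↑S : Set (PJ k ι)) ∧ ∀ S' : Finset (PJ k ι), S' ⊂ S → q ∉ pspan (↑S' : Set (PJ k ι))

/-- `𝒮(X,q,t)`: cardinality-`t` subsets of `X` irredundantly spanning `q`. -/
def irrSets {ι : Type} (X : Set (PJ k ι)) (q : PJ k ι) (t : ℕ) : Set (Finset (PJ k ι)) :=
  {S | ↑S ⊆ X ∧ S.card = t ∧ IrrSpans q S}

/-- `W_{q,t} := ⋂_{S ∈ 𝒮(X,q,t)} ⟨S⟩` (equal to the whole space when `𝒮(X,q,t) = ∅`). -/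
def WsetT {ι : Type} (X : Set (PJ k ι)) (q : PJ k ι) (t : ℕ) : Set (PJ k ι) :=
  ⋂ S ∈ irrSets X q t, pspan (↑S : Set (PJ k ι))

/-- Common zero locus in projective space of a set of (homogeneous) polynomials. -/
def zLocus {ι : Type} (T : Set (MvPolynomial ι k)) : Set (PJ k ι) :=
  {p | ∀ f ∈ T, MvPolynomial.eval p.rep f = 0}

/-- Zariski-closed subsets of projective space. -/
def ZClosed {ι : Type} (C : Set (PJ k ι)) : Prop :=
  ∃ T : Set (MvPolynomial ι k), (∀ f ∈ T, ∃ n, f.IsHomogeneous n) ∧ C = zLocus T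

/-- Zariski-open subsets of projective space. -/
def ZOpen {ι : Type} (U : Set (PJ k ι)) : Prop := ZClosed Uᶜ

/-- Irreducibility of a set for the Zariski topology. -/
def ZIrred {ι : Type} (C : Set (PJ k ι)) : Prop :=
  C.Nonempty ∧ ∀ C₁ C₂ : Set (PJ k ι), ZClosed C₁ → ZClosed C₂ → C ⊆ C₁ ∪ C₂ →
    C ⊆ C₁ ∨ C ⊆ C₂

/-- An integral (i.e. reduced and irreducible, here: irreducible closed) subvariety. -/
def IsVariety {ι : Type} (X : Set (PJ k ι)) : Prop := ZClosed X ∧ ZIrred X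

/-- Non-degenerate: not contained in any hyperplane. -/
def Nondeg {ι : Type} (X : Set (PJ k ι)) : Prop := pspan X = Set.univ

/-- Zariski closure. -/
def zClosure {ι : Type} (S : Set (PJ k ι)) : Set (PJ k ι) :=
  ⋂₀ {C | ZClosed C ∧ S ⊆ C}

/-- The `b`-th secant variety of `X`. -/
def secantVar {ι : Type} (X : Set (PJ k ι)) (b : ℕ) : Set (PJ k ι) :=
  zClosure (⋃ S ∈ {S : Finset (PJ k ι) | ↑S ⊆ X ∧ S.card = b}, pspan (↑S : Set (PJ k ι)))

/-- The border `X`-rank of `q`. -/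
def borderRank {ι : Type} (X : Set (PJ k ι)) (q : PJ k ι) : ℕ :=
  sInf {b | 0 < b ∧ q ∈ secantVar X b}

/-- Dimension of a set: sup of lengths of chains of irreducible closed subsets. -/
def varDim {ι : Type} (X : Set (PJ k ι)) : ℕ :=
  sSup {n | ∃ c : Fin (n + 1) → Set (PJ k ι), StrictMono c ∧
    (∀ i, ZClosed (c i) ∧ ZIrred (c i)) ∧ ∀ i, c i ⊆ X}

/-- The vector-space dimension of the linear span of a set of projective points
(the projective dimension is this number minus `1`). -/
def sdim {ι : Type} (T : Set (PJ k ι)) : ℕ :=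
  Module.finrank k (Submodule.span k (Projectivization.rep '' T))

/-- A projective linear subspace whose underlying linear subspace has dimension `m`. -/
def IsLinSub {ι : Type} (m : ℕ) (L : Set (PJ k ι)) : Prop :=
  ∃ W : Submodule k (ι → k), Module.finrank k W = m ∧ L = {p | p.rep ∈ W}

/-- A line in projective space. -/
def IsLine {ι : Type} (L : Set (PJ k ι)) : Prop := IsLinSub 2 L

/-- A hyperplane in `ℙ^r`. -/
def IsHyperplane {r : ℕ} (H : Set (PP k r)) : Prop := IsLinSub r H

/-- The standard vector of monomials defining the rational normal curve. -/
def rncVec (d : ℕ) (a b : k) : Fin (d + 1) → k := fun i => a ^ (d - (i : ℕ)) * b ^ (i : ℕ)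

/-- The degree-`d` rational normal curve in `ℙ^d` (image of the `d`-th Veronese of `ℙ^1`). -/
def rnc (d : ℕ) : Set (PP k d) :=
  {p | ∃ a b c : k, ¬(a = 0 ∧ b = 0) ∧ c ≠ 0 ∧ p.rep = c • rncVec d a b}

/-- The linear span of the degree-`b` zero-dimensional subscheme of the degree-`d`
rational normal curve corresponding to a nonzero binary form with coefficients `g`
(points of the span are exactly the sequences satisfying the associated linear recurrence). -/
def schemeSpan (d b : ℕ) (g : Fin (b + 1) → k) : Set (PP k d) :=
  {p | ∀ i : ℕ, ∀ _h : i + b ≤ d,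
    ∑ j : Fin (b + 1), g j * p.rep ⟨i + (j : ℕ), by have := j.isLt; omega⟩ = 0}

/-- The cactus rank of a point of `ℙ^d` with respect to the rational normal curve:
minimal degree of a zero-dimensional subscheme of the curve whose span contains `q`. -/
def cactusRank (d : ℕ) (q : PP k d) : ℕ :=
  sInf {b | ∃ g : Fin (b + 1) → k, g ≠ 0 ∧ q ∈ schemeSpan d b g}

/-- A property `P` holds for a general `m`-tuple of points of projective space:
it holds away from the zero locus of some nonzero multihomogeneous polynomial. -/
def GenlHolds {ι : Type} (m : ℕ) (P : (Fin m → PJ k ι) → Prop) : Prop :=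
  ∃ F : MvPolynomial (Fin m × ι) k, F ≠ 0 ∧
    ∀ u : Fin m → PJ k ι,
      MvPolynomial.eval (fun x => (u x.1).rep x.2) F ≠ 0 → P u

/-- A property `P` holds for a general `m`-tuple of points of `X`. -/
def GenlHoldsOn {ι : Type} (X : Set (PJ k ι)) (m : ℕ) (P : (Fin m → PJ k ι) → Prop) : Prop :=
  ∃ F : MvPolynomial (Fin m × ι) k,
    (∃ u : Fin m → PJ k ι, (∀ i, u i ∈ X) ∧
      MvPolynomial.eval (fun x => (u x.1).rep x.2) F ≠ 0) ∧
    ∀ u : Fin m → PJ k ι, (∀ i, u i ∈ X) →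
      MvPolynomial.eval (fun x => (u x.1).rep x.2) F ≠ 0 → P u

/-- Degree-`t` forms vanishing on a set of projective points. -/
def vanishSub {ι : Type} (T : Set (PJ k ι)) : Submodule k (MvPolynomial ι k) :=
  ⨅ p ∈ T, LinearMap.ker (MvPolynomial.aeval (R := k) (Projectivization.rep p)).toLinearMap

/-- `h⁰(𝓘_T(t))`: dimension of the space of degree-`t` forms vanishing on `T`. -/
def h0 {ι : Type} (t : ℕ) (T : Set (PJ k ι)) : ℕ :=
  Module.finrank k ↥(MvPolynomial.homogeneousSubmodule ι k t ⊓ vanishSub T)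

/-- `h¹(𝓘_S(d))` for a finite set of points `S`: the failure of `S` to impose
independent conditions on degree-`d` forms. -/
def h1I {ι : Type} (S : Finset (PJ k ι)) (d : ℕ) : ℕ :=
  S.card - (Module.finrank k ↥(MvPolynomial.homogeneousSubmodule ι k d) - h0 d (↑S : Set (PJ k ι)))

/-- Index type for the coordinates of the degree-`d` Veronese embedding of `ℙ^n`:
exponent vectors of total degree `d` (there are `(n+d choose n)` of them). -/
def ExpIdx (n d : ℕ) : Type := {m : Fin (n + 1) → ℕ // ∑ i, m i = d}

/-- The vector of all degree-`d` monomials evaluated at `u`. -/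
def verVec (n d : ℕ) (u : Fin (n + 1) → k) : ExpIdx n d → k := fun m => ∏ i, u i ^ m.1 i

lemma verVec_ne_zero {n d : ℕ} {u : Fin (n + 1) → k} (hu : u ≠ 0) :
    verVec (k := k) n d u ≠ 0 := by
  obtain ⟨i, hi⟩ := Function.ne_iff.mp hu
  intro h
  have hm : (∑ j, if j = i then d else 0) = d := by simp
  have h0 : verVec n d u ⟨fun j => if j = i then d else 0, hm⟩ = 0 := by rw [h]; rfl
  have h1 : verVec n d u ⟨fun j => if j = i then d else 0, hm⟩ = u i ^ d := by
    simp only [verVec]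
    rw [Finset.prod_eq_single i (fun b _ hb => by simp [hb]) (by simp)]
    simp
  rw [h1] at h0
  rcases eq_or_ne d 0 with hd | hd
  · rw [hd] at h0; simp at h0
  · exact hi ((pow_eq_zero_iff hd).mp h0)

/-- The degree-`d` Veronese embedding `ν_d : ℙ^n → ℙ^r`, `r = (n+d choose n) - 1`. -/
def nud (n d : ℕ) (p : PP k n) : PJ k (ExpIdx n d) :=
  Projectivization.mk k (verVec n d p.rep) (verVec_ne_zero p.rep_nonzero)

/-!
If `S` irredundantly spans `q`, no point of `S` lies in the span of the others (it could be
dropped), so the representatives of `S` are linearly independent and `#S ≤ r + 1`.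

Conversely, `u₀, …, u_r` irredundantly span `q` as soon as they form a basis in which no
coordinate of `q` vanishes, i.e. as soon as `q, u₀, …, u_r` are in linear general position.
This is the nonvanishing of a product of determinants, a polynomial condition on the `uᵢ`; and
since an irreducible non-degenerate `X` is not covered by finitely many proper linear subspaces,
such points can be chosen in `X` one at a time.
-/

section GeneralPosition

variable {V ι : Type*} [AddCommGroup V] [Module k V]

variable (k) in
def LinearGeneralPosition (v : ι → V) : Prop :=
  ∀ s : Finset ι, s.card ≤ Module.finrank k V → LinearIndepOn k v s

theorem span_image_ne_top_of_card_lt_finrank {v : ι → V} {s : Finset ι}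
    (hs : s.card < Module.finrank k V) : Submodule.span k (v '' s) ≠ ⊤ := by
  classical
  intro htop
  have := finrank_span_finset_le_card (R := k) (s.image v)
  rw [Set.finrank, Finset.coe_image, htop, finrank_top] at this
  exact (this.trans Finset.card_image_le).not_gt hs

namespace LinearGeneralPosition

theorem linearIndependent_comp {v : ι → V} (hv : LinearGeneralPosition k v) {κ : Type*}
    [Fintype κ] {f : κ → ι} (hf : f.Injective) (hκ : Fintype.card κ ≤ Module.finrank k V) :
    LinearIndependent k (v ∘ f) := by
  classical
  rw [← linearIndepOn_range_iff hf]
  simpa using hv (Finset.univ.image f) (Finset.card_image_le.trans hκ)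

theorem snoc {n : ℕ} {v : Fin n → V} (hv : LinearGeneralPosition k v) {x : V}
    (hx : ∀ s : Finset (Fin n), s.card < Module.finrank k V → x ∉ Submodule.span k (v '' s)) :
    LinearGeneralPosition k (Fin.snoc v x : Fin (n + 1) → V) := by
  classical
  intro s hs
  set t := s.preimage Fin.castSucc (Fin.castSucc_injective n).injOn
  have hts : t.map Fin.castSuccEmb ⊆ s := Finset.map_subset_iff_subset_preimage.2 subset_rfl
  have ht : LinearIndepOn k (Fin.snoc v x) (Fin.castSucc '' t) :=
    LinearIndepOn.image_of_comp _ _ (by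
      rw [Fin.snoc_comp_castSucc]
      exact hv t ((Finset.card_map _).symm.le.trans ((Finset.card_le_card hts).trans hs)))
  by_cases hlast : Fin.last n ∈ s
  · have hs' : (s : Set (Fin (n + 1))) = insert (Fin.last n) (Fin.castSucc '' t) := by
      ext i
      induction i using Fin.lastCases <;> simp [t, hlast]
    have hcard : t.card + 1 ≤ s.card := by
      have := Finset.card_le_card (Finset.insert_subset hlast hts)
      rwa [Finset.card_insert_of_notMem (by simp [Fin.castSucc_ne_last]), Finset.card_map] at this
    rw [hs', linearIndepOn_insert (by simp [Fin.castSucc_ne_last])]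
    refine ⟨ht, ?_⟩
    rw [Set.image_image]
    simpa using hx t (by omega)
  · have hs' : (s : Set (Fin (n + 1))) = Fin.castSucc '' t := by
      ext i
      induction i using Fin.lastCases <;> simp [t, hlast]
    rw [hs']
    exact ht

theorem linearIndependent_update_of_cons {n : ℕ} {v : Fin n → V} {x : V}
    (hv : LinearGeneralPosition k (Fin.cons x v : Fin (n + 1) → V))
    (hn : n ≤ Module.finrank k V) :
    LinearIndependent k v ∧ ∀ i, LinearIndependent k (Function.update v i x) := by
  have h : ∀ f : Fin n → Fin (n + 1), f.Injective →
      LinearIndependent k (Fin.cons x v ∘ f) :=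
    fun f hf => hv.linearIndependent_comp hf (by simpa using hn)
  refine ⟨by simpa using h Fin.succ (Fin.succ_injective _), fun i => ?_⟩
  have hinj : Function.Injective (Function.update Fin.succ i (0 : Fin (n + 1))) := by
    intro a b hab
    by_cases ha : a = i <;> by_cases hb : b = i
    · rw [ha, hb]
    · simp [ha, Function.update_of_ne hb, (Fin.succ_ne_zero b).symm] at hab
    · simp [hb, Function.update_of_ne ha, Fin.succ_ne_zero] at hab
    · simpa [Function.update_of_ne ha, Function.update_of_ne hb] using hab
  simpa [Function.comp_update] using h _ hinj

end LinearGeneralPosition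

end GeneralPosition

section Zariski

variable {ι : Type}

theorem Module.Dual.exists_isHomogeneous_eval_eq [Fintype ι] (φ : Module.Dual k (ι → k)) :
    ∃ f : MvPolynomial ι k, f.IsHomogeneous 1 ∧ ∀ v, MvPolynomial.eval v f = φ v := by
  classical
  refine ⟨∑ j, MvPolynomial.C (φ (Pi.single j 1)) * MvPolynomial.X j,
    .sum _ _ _ fun j _ => MvPolynomial.isHomogeneous_C_mul_X _ j, fun v => ?_⟩
  conv_rhs => rw [← Finset.univ_sum_single v]
  simp only [map_sum, map_mul, MvPolynomial.eval_C, MvPolynomial.eval_X]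
  refine Finset.sum_congr rfl fun j _ => ?_
  rw [mul_comm, ← smul_eq_mul, ← map_smul, ← Pi.single_smul, smul_eq_mul, mul_one]

theorem zClosed_setOf_rep_mem [Fintype ι] (W : Submodule k (ι → k)) :
    ZClosed {p : PJ k ι | p.rep ∈ W} := by
  refine ⟨{f | f.IsHomogeneous 1 ∧ ∀ w ∈ W, MvPolynomial.eval w f = 0},
    fun f hf => ⟨1, hf.1⟩, Set.ext fun p => ⟨fun hp f hf => hf.2 _ hp, fun hp => ?_⟩⟩
  by_contra hpW
  obtain ⟨φ, hφp, hφW⟩ := W.exists_dual_map_eq_bot_of_notMem hpW inferInstance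
  obtain ⟨f, hf, hfφ⟩ := φ.exists_isHomogeneous_eval_eq
  refine hφp ((hfφ _).symm.trans (hp f ⟨hf, fun w hw => ?_⟩))
  rw [hfφ, ← Submodule.mem_bot k, ← hφW]
  exact Submodule.mem_map_of_mem hw

theorem zClosed_empty : ZClosed (∅ : Set (PJ k ι)) :=
  ⟨{1}, fun f hf => ⟨0, hf ▸ MvPolynomial.isHomogeneous_one ι k⟩, by simp [zLocus]⟩

theorem ZClosed.union {C D : Set (PJ k ι)} (hC : ZClosed C) (hD : ZClosed D) :
    ZClosed (C ∪ D) := by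
  obtain ⟨S, hS, rfl⟩ := hC
  obtain ⟨T, hT, rfl⟩ := hD
  refine ⟨Set.image2 (· * ·) S T, ?_, Set.ext fun p => ⟨?_, fun hp => ?_⟩⟩
  · rintro _ ⟨f, hf, g, hg, rfl⟩
    obtain ⟨m, hm⟩ := hS f hf
    obtain ⟨n, hn⟩ := hT g hg
    exact ⟨m + n, hm.mul hn⟩
  · rintro (hp | hp) _ ⟨f, hf, g, hg, rfl⟩
    · simp [hp f hf]
    · simp [hp g hg]
  · by_contra! h
    obtain ⟨⟨f, hf, hfp⟩, ⟨g, hg, hgp⟩⟩ : (∃ f ∈ S, _) ∧ (∃ g ∈ T, _) := by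
      simpa [zLocus, not_or] using h
    exact mul_ne_zero hfp hgp (by simpa using hp _ ⟨f, hf, g, hg, rfl⟩)

theorem ZClosed.biUnion_finset {α : Type*} {s : Finset α} {C : α → Set (PJ k ι)}
    (hC : ∀ a ∈ s, ZClosed (C a)) : ZClosed (⋃ a ∈ s, C a) := by
  classical
  induction s using Finset.induction_on with
  | empty => simpa using zClosed_empty
  | insert a s _ ih =>
    rw [Finset.set_biUnion_insert]
    exact (hC a (s.mem_insert_self a)).union (ih fun b hb => hC b (Finset.mem_insert_of_mem hb))

theorem ZIrred.exists_subset_of_subset_biUnion {X : Set (PJ k ι)} (hX : ZIrred X) {α : Type*}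
    {s : Finset α} {C : α → Set (PJ k ι)} (hC : ∀ a ∈ s, ZClosed (C a))
    (hXC : X ⊆ ⋃ a ∈ s, C a) : ∃ a ∈ s, X ⊆ C a := by
  classical
  induction s using Finset.induction_on with
  | empty =>
    obtain ⟨x, hx⟩ := hX.1
    simpa using hXC hx
  | insert a s _ ih =>
    rw [Finset.set_biUnion_insert] at hXC
    have hCs : ∀ b ∈ s, ZClosed (C b) := fun b hb => hC b (Finset.mem_insert_of_mem hb)
    rcases hX.2 _ _ (hC a (s.mem_insert_self a)) (.biUnion_finset hCs) hXC with h | h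
    · exact ⟨a, s.mem_insert_self a, h⟩
    · obtain ⟨b, hb, h⟩ := ih hCs h
      exact ⟨b, Finset.mem_insert_of_mem hb, h⟩

theorem Nondeg.span_rep_eq_top {X : Set (PJ k ι)} (hX : Nondeg X) :
    Submodule.span k (Projectivization.rep '' X) = ⊤ := by
  refine Submodule.eq_top_iff'.2 fun v => ?_
  rcases eq_or_ne v 0 with rfl | hv
  · exact Submodule.zero_mem _
  obtain ⟨a, ha⟩ := Projectivization.exists_smul_eq_mk_rep k v hv
  have hmem : (mk k v hv).rep ∈ Submodule.span k (Projectivization.rep '' X) :=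
    (hX ▸ Set.mem_univ _ : mk k v hv ∈ pspan X)
  rw [← ha] at hmem
  exact (Submodule.smul_mem_iff' _ a).mp hmem

theorem exists_mem_forall_rep_notMem [Fintype ι] {X : Set (PJ k ι)} (hXi : ZIrred X)
    (hXn : Nondeg X) {α : Type*} (s : Finset α) (W : α → Submodule k (ι → k))
    (hW : ∀ a ∈ s, W a ≠ ⊤) : ∃ x ∈ X, ∀ a ∈ s, x.rep ∉ W a := by
  by_contra! h
  obtain ⟨a, ha, hXa⟩ := hXi.exists_subset_of_subset_biUnion
    (fun a _ => zClosed_setOf_rep_mem (W a)) fun x hx => by simpa using h x hx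
  refine hW a ha (top_unique (hXn.span_rep_eq_top ▸ Submodule.span_le.2 ?_))
  rintro _ ⟨x, hx, rfl⟩
  exact hXa hx

end Zariski

section Irredundant

variable {ι : Type}

theorem IrrSpans.linearIndepOn_rep {q : PJ k ι} {S : Finset (PJ k ι)} (h : IrrSpans q S) :
    LinearIndepOn k Projectivization.rep (S : Set (PJ k ι)) := by
  classical
  refine linearIndepOn_iff_notMem_span.2 fun p hp hpS => h.2 (S.erase p) (S.erase_ssubset hp) ?_
  rw [← Finset.coe_erase] at hpS
  change q.rep ∈ Submodule.span k _
  rw [← Submodule.span_insert_eq_span hpS, ← Set.image_insert_eq, ← Finset.coe_insert,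
    Finset.insert_erase hp]
  exact h.1

theorem IrrSpans.card_le [Fintype ι] {q : PJ k ι} {S : Finset (PJ k ι)} (h : IrrSpans q S) :
    S.card ≤ Fintype.card ι := by
  simpa using h.linearIndepOn_rep.linearIndependent.fintype_card_le_finrank

theorem irrSets_eq_empty [Fintype ι] (X : Set (PJ k ι)) (q : PJ k ι) {t : ℕ}
    (ht : Fintype.card ι < t) : irrSets X q t = ∅ :=
  Set.eq_empty_of_forall_notMem fun _ ⟨_, hcard, hS⟩ => (hcard ▸ hS.card_le).not_gt ht

theorem mem_irrSets_of_linearIndependent_update [Fintype ι] [DecidableEq ι]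
    [DecidableEq (PJ k ι)] {X : Set (PJ k ι)} {q : PJ k ι} {u : ι → PJ k ι}
    (huX : ∀ i, u i ∈ X)
    (hu : LinearIndependent k fun i => (u i).rep)
    (huq : ∀ i, LinearIndependent k (Function.update (fun i => (u i).rep) i q.rep)) :
    Function.Injective u ∧ Finset.univ.image u ∈ irrSets X q (Fintype.card ι) := by
  have hinj : Function.Injective u :=
    Function.Injective.of_comp (f := Projectivization.rep) hu.injective
  have hrange : ((Finset.univ.image u : Finset (PJ k ι)) : Set (PJ k ι)) = Set.range u := by simp
  refine ⟨hinj, by simpa [hrange, Set.range_subset_iff] using huX,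
    by simp [Finset.card_image_of_injective _ hinj], ?_, fun S' hS' hqS' => ?_⟩
  · change q.rep ∈ Submodule.span k _
    rw [hrange, ← Set.range_comp, Function.comp_def,
      hu.span_eq_top_of_card_eq_finrank' (by simp)]
    trivial
  obtain ⟨_, hp, hpS'⟩ := Finset.exists_of_ssubset hS'
  obtain ⟨i, -, rfl⟩ := Finset.mem_image.1 hp
  have hS'i : Projectivization.rep '' (S' : Set (PJ k ι)) ⊆ (fun j => (u j).rep) '' {i}ᶜ := by
    rintro _ ⟨p, hp', rfl⟩
    obtain ⟨j, -, rfl⟩ := Finset.mem_image.1 (hS'.1 hp')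
    exact ⟨j, by rintro rfl; exact hpS' hp', rfl⟩
  refine (huq i).notMem_span_image (x := i) (s := {i}ᶜ) (by simp) ?_
  rw [Function.update_self,
    Set.image_congr (s := {i}ᶜ) (g := fun j => (u j).rep) fun j hj =>
      Function.update_of_ne hj _ _]
  exact Submodule.span_mono hS'i hqS'

end Irredundant

section Construction

variable {ι : Type} [Fintype ι]

theorem exists_linearGeneralPosition_cons {X : Set (PJ k ι)} (hXi : ZIrred X) (hXn : Nondeg X)
    (q : PJ k ι) (n : ℕ) : ∃ u : Fin n → PJ k ι, (∀ i, u i ∈ X) ∧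
      LinearGeneralPosition k (Fin.cons q.rep fun i => (u i).rep : Fin (n + 1) → ι → k) := by
  classical
  induction n with
  | zero =>
    refine ⟨Fin.elim0, fun i => i.elim0, fun s _ => ?_⟩
    refine ((linearIndepOn_singleton_iff k (i := 0)).2 q.rep_nonzero).mono ?_
    exact Set.subset_singleton_iff.2 fun i _ => Fin.fin_one_eq_zero i
  | succ n ih =>
    obtain ⟨u, huX, hu⟩ := ih
    set w : Fin (n + 1) → ι → k := Fin.cons q.rep fun i => (u i).rep
    obtain ⟨x, hxX, hx⟩ := exists_mem_forall_rep_notMem hXi hXn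
      (Finset.univ.filter fun s : Finset (Fin (n + 1)) => s.card < Module.finrank k (ι → k))
      (fun s => Submodule.span k (w '' s))
      fun s hs => span_image_ne_top_of_card_lt_finrank (Finset.mem_filter.1 hs).2
    refine ⟨(Fin.snoc u x : Fin (n + 1) → PJ k ι),
      fun i => Fin.lastCases (by simpa using hxX) (by simpa using huX) i, ?_⟩
    have hw : (Fin.cons q.rep fun i => (Fin.snoc (α := fun _ => PJ k ι) u x i).rep :
        Fin (n + 2) → ι → k) = Fin.snoc w x.rep := by
      rw [← Fin.cons_snoc_eq_snoc_cons]
      exact congrArg _ (Fin.comp_snoc Projectivization.rep u x)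
    rw [hw]
    exact hu.snoc fun s hs => hx s (by simpa using hs)

end Construction

section Determinants

variable {ι : Type} [Fintype ι] [DecidableEq ι]

theorem det_of_ne_zero_iff_linearIndependent (v : ι → ι → k) :
    (Matrix.of v).det ≠ 0 ↔ LinearIndependent k v := by
  rw [← isUnit_iff_ne_zero, ← Matrix.isUnit_iff_isUnit_det,
    ← Matrix.linearIndependent_rows_iff_isUnit]
  rfl

def irredundancyPoly (q : ι → k) : MvPolynomial (ι × ι) k :=
  let U : Matrix ι ι (MvPolynomial (ι × ι) k) := Matrix.of fun i j => MvPolynomial.X (i, j)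
  U.det * ∏ i, (U.updateRow i fun j => MvPolynomial.C (q j)).det

theorem eval_irredundancyPoly_ne_zero_iff (q : ι → k) (v : ι → ι → k) :
    MvPolynomial.eval (fun x => v x.1 x.2) (irredundancyPoly q) ≠ 0 ↔
      LinearIndependent k v ∧ ∀ i, LinearIndependent k (Function.update v i q) := by
  have hU : (Matrix.of fun i j => MvPolynomial.X (i, j)).map
      (MvPolynomial.eval fun x : ι × ι => v x.1 x.2) = Matrix.of v := by
    ext; simp
  have hq : (MvPolynomial.eval fun x : ι × ι => v x.1 x.2) ∘ (fun j => MvPolynomial.C (q j)) =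
      q := by
    ext; simp
  have hrow (i : ι) : (Matrix.of v).updateRow i q = Matrix.of (Function.update v i q) := rfl
  simp only [irredundancyPoly, map_mul, map_prod, RingHom.map_det, RingHom.mapMatrix_apply,
    Matrix.map_updateRow, hU, hq, hrow, mul_ne_zero_iff, Finset.prod_ne_zero_iff,
    Finset.mem_univ, forall_const, det_of_ne_zero_iff_linearIndependent]

end Determinants

theorem statement10_general {k : Type} [Field k] {r : ℕ}
    [DecidableEq (PP k r)]
    (X : Set (PP k r)) (hXv : IsVariety X) (hXn : Nondeg X) (q : PP k r) :
    (∀ t : ℕ, r + 2 ≤ t → irrSets X q t = ∅) ∧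
    (irrSets X q (r + 1)).Nonempty ∧
    GenlHoldsOn X (r + 1) (fun u =>
      Function.Injective u ∧ Finset.univ.image u ∈ irrSets X q (r + 1)) := by
  obtain ⟨u, huX, hgp⟩ := exists_linearGeneralPosition_cons hXv.2 hXn q (r + 1)
  have hu := hgp.linearIndependent_update_of_cons (by simp)
  have hframe {u : Fin (r + 1) → PP k r} (huX : ∀ i, u i ∈ X)
      (hu : LinearIndependent k (fun i => (u i).rep) ∧
        ∀ i, LinearIndependent k (Function.update (fun i => (u i).rep) i q.rep)) :
      Function.Injective u ∧ Finset.univ.image u ∈ irrSets X q (r + 1) := by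
    simpa using mem_irrSets_of_linearIndependent_update huX hu.1 hu.2
  refine ⟨fun t ht => irrSets_eq_empty X q (by rw [Fintype.card_fin]; omega),
    ⟨_, (hframe huX hu).2⟩, irredundancyPoly q.rep, ⟨u, huX, ?_⟩,
    fun u huX hu => hframe huX ?_⟩
  · exact (eval_irredundancyPoly_ne_zero_iff q.rep fun i => (u i).rep).2 hu
  · exact (eval_irredundancyPoly_ne_zero_iff q.rep fun i => (u i).rep).1 hu

/-- `𝒮(X,q,t) = ∅` for `t ≥ r + 2`, while `𝒮(X,q,r+1)` is nonempty and
contains a general subset of `X` of cardinality `r + 1`. -/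
theorem statement10 {k : Type} [Field k] [IsAlgClosed k] {r : ℕ}
    [DecidableEq (PP k r)]
    (X : Set (PP k r)) (hXv : IsVariety X) (hXn : Nondeg X) (q : PP k r) :
    (∀ t : ℕ, r + 2 ≤ t → irrSets X q t = ∅) ∧
    (irrSets X q (r + 1)).Nonempty ∧
    GenlHoldsOn X (r + 1) (fun u =>
      Function.Injective u ∧ Finset.univ.image u ∈ irrSets X q (r + 1)) :=
  statement10_general X hXv hXn q

end
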